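/- arXiv:2007.13911 — 2 statements merged into one kernel-verified Lean document; each statement's English description precedes it below -/
import Mathlib

section
/- Let p ∈ (0,1), α, β ∈ (0,1), and α', β' ∈ (0,1) with 1−α' > β' and 1−β' > α'. Set c₋ = log((1−α')/β'), c₊ = log((1−β')/α') + c₋, q = 1−p, and fix ω* ∈ ℕ. Define L : ℕ → ℝ by L(ω) = ((1−β)c₊ − c₋)·(1 − q^ω) for ω ≤ ω*, and L(ω) = c₊(1−β−α)·(1 − q^{ω*}) − (c₋ − α c₊)·(1 − q^ω) for ω > ω*. If (1−α)/α > log((1−β')/α') / log((1−α')/β') > β/(1−β), then L(ω) < L(ω*) for every ω ∈ ℕ with ω ≠ ω*, i.e., L is uniquely maximized at ω = ω*. -/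
/-!
Both branches of `L` are affine in `1 - q ^ ω`, which increases strictly with `ω`. The two bounds
on the log ratio say exactly that the slopes `(1 - β) c₊ - c₋` and `c₋ - α c₊` are positive, and
these slopes sum to `c₊ (1 - β - α)`, so the branches agree at `ω*`: `L` rises up to `ω*` and
falls after it.
-/

theorem lt_of_ne_of_eq_ite_mul_strictMono {ι 𝕜 : Type*} [LinearOrder ι] [Field 𝕜] [LinearOrder 𝕜]
    [IsStrictOrderedRing 𝕜] {f L : ι → 𝕜} (hf : StrictMono f) {c₁ c₂ : 𝕜}
    (hc₁ : 0 < c₁) (hc₂ : 0 < c₂) {n : ι}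
    (hL : ∀ m, L m = if m ≤ n then c₁ * f m else (c₁ + c₂) * f n - c₂ * f m)
    {m : ι} (hm : m ≠ n) : L m < L n := by
  rw [hL m, hL n, if_pos le_rfl]
  rcases hm.lt_or_gt with hlt | hgt
  · rw [if_pos hlt.le]
    exact mul_lt_mul_of_pos_left (hf hlt) hc₁
  · rw [if_neg hgt.not_ge]
    linarith [mul_lt_mul_of_pos_left (hf hgt) hc₂]

theorem one_sub_pow_strictMono {𝕜 : Type*} [Ring 𝕜] [LinearOrder 𝕜] [IsStrictOrderedRing 𝕜]
    {q : 𝕜} (h₀ : 0 < q) (h₁ : q < 1) : StrictMono fun n : ℕ => 1 - q ^ n :=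
  fun _ _ hmn => sub_lt_sub_left (pow_lt_pow_right_of_lt_one₀ h₀ h₁ hmn) 1

theorem sub_pos_of_div_one_sub_lt_div {𝕜 : Type*} [Field 𝕜] [LinearOrder 𝕜]
    [IsStrictOrderedRing 𝕜] {a b β : 𝕜} (ha : 0 < a) (hβ : β < 1)
    (h : β / (1 - β) < b / a) : 0 < (1 - β) * (a + b) - a := by
  rw [div_lt_div_iff₀ (sub_pos.2 hβ) ha] at h
  linarith

theorem sub_pos_of_div_lt_one_sub_div {𝕜 : Type*} [Field 𝕜] [LinearOrder 𝕜]
    [IsStrictOrderedRing 𝕜] {a b α : 𝕜} (ha : 0 < a) (hα : 0 < α)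
    (h : b / a < (1 - α) / α) : 0 < a - α * (a + b) := by
  rw [div_lt_div_iff₀ ha hα] at h
  linarith

theorem misspecified_likelihood_consistency_general
    (p α β α' β' : ℝ) (hp : p ∈ Set.Ioo (0:ℝ) 1)
    (hα : α ∈ Set.Ioo (0:ℝ) 1) (hβ : β ∈ Set.Ioo (0:ℝ) 1)
    (hβ' : β' ∈ Set.Ioo (0:ℝ) 1)
    (h1 : 1 - α' > β')
    (cm cp q : ℝ)
    (hcm : cm = Real.log ((1 - α') / β'))
    (hcp : cp = Real.log ((1 - β') / α') + cm)
    (hq : q = 1 - p) (ωs : ℕ)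
    (L : ℕ → ℝ)
    (hL : ∀ ω : ℕ, L ω = if ω ≤ ωs then ((1 - β) * cp - cm) * (1 - q ^ ω)
          else cp * (1 - β - α) * (1 - q ^ ωs) - (cm - α * cp) * (1 - q ^ ω))
    (hbound₁ : (1 - α) / α > Real.log ((1 - β') / α') / Real.log ((1 - α') / β'))
    (hbound₂ : Real.log ((1 - β') / α') / Real.log ((1 - α') / β') > β / (1 - β)) :
    ∀ ω : ℕ, ω ≠ ωs → L ω < L ωs := by
  intro ω hω
  have hcm_pos : 0 < cm := hcm ▸ Real.log_pos ((one_lt_div hβ'.1).2 h1)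
  rw [← hcm] at hbound₁ hbound₂
  have hcp' : cp = cm + Real.log ((1 - β') / α') := by rw [hcp, add_comm]
  have hc₁ : 0 < (1 - β) * cp - cm := hcp' ▸ sub_pos_of_div_one_sub_lt_div hcm_pos hβ.2 hbound₂
  have hc₂ : 0 < cm - α * cp := hcp' ▸ sub_pos_of_div_lt_one_sub_div hcm_pos hα.1 hbound₁
  have hq₀ : 0 < q := by linarith [hp.2]
  have hq₁ : q < 1 := by linarith [hp.1]
  refine lt_of_ne_of_eq_ite_mul_strictMono (one_sub_pow_strictMono hq₀ hq₁) hc₁ hc₂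
    (fun m => ?_) hω
  rw [hL m]
  congr 2
  ring

/-- Consistency of maximum likelihood under misspecified test error rates: with true rates
`(α, β)` and assumed rates `(α', β')`, coefficients `c₋ = log((1−α')/β')`,
`c₊ = log((1−β')/α') + c₋`, `q = 1−p`, the asymptotic scaled log likelihood
`L(ω)` (as a function of the number `ω` of nonzero connections) is uniquely maximized at
the true number `ω*`, provided `(1−α)/α > log((1−β')/α')/log((1−α')/β') > β/(1−β)`. -/
theorem misspecified_likelihood_consistency
    (p α β α' β' : ℝ) (hp : p ∈ Set.Ioo (0:ℝ) 1)
    (hα : α ∈ Set.Ioo (0:ℝ) 1) (hβ : β ∈ Set.Ioo (0:ℝ) 1)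
    (hα' : α' ∈ Set.Ioo (0:ℝ) 1) (hβ' : β' ∈ Set.Ioo (0:ℝ) 1)
    (h1 : 1 - α' > β') (h2 : 1 - β' > α')
    (cm cp q : ℝ)
    (hcm : cm = Real.log ((1 - α') / β'))
    (hcp : cp = Real.log ((1 - β') / α') + cm)
    (hq : q = 1 - p) (ωs : ℕ)
    (L : ℕ → ℝ)
    (hL : ∀ ω : ℕ, L ω = if ω ≤ ωs then ((1 - β) * cp - cm) * (1 - q ^ ω)
          else cp * (1 - β - α) * (1 - q ^ ωs) - (cm - α * cp) * (1 - q ^ ω))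
    (hbound₁ : (1 - α) / α > Real.log ((1 - β') / α') / Real.log ((1 - α') / β'))
    (hbound₂ : Real.log ((1 - β') / α') / Real.log ((1 - α') / β') > β / (1 - β)) :
    ∀ ω : ℕ, ω ≠ ωs → L ω < L ωs :=
  misspecified_likelihood_consistency_general p α β α' β' hp hα hβ hβ' h1 cm cp q hcm hcp hq ωs L hL
    hbound₁ hbound₂
end

section
/- Let α, β ∈ (0, 1/2) and let α' = β' = r for some r ∈ (0, 1/2). Then 1−α' > β', 1−β' > α', and the misspecification bound (1−α)/α > log((1−β')/α') / log((1−α')/β') > β/(1−β) holds. -/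
/-! With `α' = β'` the ratio of logarithms is `1`, so the bound reduces to
`(1 - α) / α > 1 > β / (1 - β)`, which is exactly `α, β < 1/2`. -/

section ErrorRates

variable {K : Type*} [Field K] [LinearOrder K] [IsStrictOrderedRing K]

theorem one_lt_one_sub_div_self {a : K} (ha₀ : 0 < a) (ha : a < 1 / 2) : 1 < (1 - a) / a := by
  rw [one_lt_div ha₀]
  linarith

theorem div_one_sub_lt_one {b : K} (hb : b < 1 / 2) : b / (1 - b) < 1 := by
  rw [div_lt_one (by linarith)]
  linarith

end ErrorRates

/-- If the true error rates `α, β` are both below `1/2` and the assumed rates are equal,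
`α' = β' = r` with `r ∈ (0, 1/2)`, then `1−α' > β'`, `1−β' > α'`, and the misspecification
bound `(1−α)/α > log((1−β')/α')/log((1−α')/β') > β/(1−β)` always holds. -/
theorem misspecification_bound_equal_rates
    (α β r : ℝ) (hα : α ∈ Set.Ioo (0:ℝ) (1/2)) (hβ : β ∈ Set.Ioo (0:ℝ) (1/2))
    (hr : r ∈ Set.Ioo (0:ℝ) (1/2))
    (α' β' : ℝ) (hα' : α' = r) (hβ' : β' = r) :
    1 - α' > β' ∧ 1 - β' > α' ∧
    (1 - α) / α > Real.log ((1 - β') / α') / Real.log ((1 - α') / β') ∧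
    Real.log ((1 - β') / α') / Real.log ((1 - α') / β') > β / (1 - β) := by
  subst hα' hβ'
  rw [div_self (Real.log_pos (one_lt_one_sub_div_self hr.1 hr.2)).ne']
  exact ⟨by linarith [hr.2], by linarith [hr.2], one_lt_one_sub_div_self hα.1 hα.2,
    div_one_sub_lt_one hβ.2⟩
end
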